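/- arXiv:2511.06966 — 2 statements merged into one kernel-verified Lean document; each statement's English description precedes it below -/
import Mathlib

section
/- Suppose A = sum_{i=1}^p u_i^{⊗m} is a CD tensor with {u_i} spanning R^n, and B = sum_{j=1}^q v_j^{⊗m} is a CD tensor such that every diagonal entry of B is positive, i.e., for each k in [n], sum_j (v_j)_k^m > 0. Then the vectors {u_i ∘ v_j} span R^n, so A ∘ B is strongly completely decomposable. -/
open Submodule

theorem Finset.exists_ne_zero_of_sum_pow_ne_zero {ι R : Type*} [Semiring R]
    (s : Finset ι) (f : ι → R) {m : ℕ} (hm : m ≠ 0) (h : ∑ i ∈ s, f i ^ m ≠ 0) :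
    ∃ i ∈ s, f i ≠ 0 := by
  obtain ⟨i, hi, hfi⟩ := Finset.exists_ne_zero_of_sum_ne_zero h
  exact ⟨i, hi, fun h0 => hfi (by rw [h0, zero_pow hm])⟩

/-- Multiplying by `v j` maps the span of the `u i` (everything) into the span of the products,
and when `v j k ≠ 0` it sends `Pi.single k 1` to a nonzero multiple of itself. -/
theorem span_range_mul_eq_top {K ι κ σ : Type*} [Field K] [Finite σ] [DecidableEq σ]
    (u : ι → σ → K) (v : κ → σ → K) (hu : span K (Set.range u) = ⊤)
    (hv : ∀ k, ∃ j, v j k ≠ 0) :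
    span K (Set.range fun ij : ι × κ => u ij.1 * v ij.2) = ⊤ := by
  set S := span K (Set.range fun ij : ι × κ => u ij.1 * v ij.2)
  have mul_mem (j : κ) (x : σ → K) : v j * x ∈ S := by
    have : span K (Set.range u) ≤ S.comap (LinearMap.mulLeft K (v j)) := by
      rw [span_le]
      rintro _ ⟨i, rfl⟩
      exact subset_span ⟨(i, j), mul_comm _ _⟩
    exact this (hu ▸ mem_top)
  rw [eq_top_iff, ← (Pi.basisFun K σ).span_eq, span_le]
  rintro _ ⟨k, rfl⟩
  obtain ⟨j, hj⟩ := hv k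
  have hsingle : v j * Pi.single k 1 = v j k • Pi.single k (1 : K) := by
    rw [← Pi.single_mul_right, ← Pi.single_smul', smul_eq_mul, mul_one]
  simpa [hsingle, smul_smul, inv_mul_cancel₀ hj] using
    S.smul_mem (v j k)⁻¹ (mul_mem j (Pi.single k 1))

theorem stmt6_general (m n p q : ℕ) (hm2 : 2 ≤ m)
    (u : Fin p → Fin n → ℝ) (v : Fin q → Fin n → ℝ)
    (hu : Submodule.span ℝ (Set.range u) = ⊤)
    (hdiag : ∀ k : Fin n, 0 < ∑ j, v j k ^ m) :
    Submodule.span ℝ (Set.range fun ij : Fin p × Fin q => u ij.1 * v ij.2) = ⊤ := by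
  refine span_range_mul_eq_top u v hu fun k => ?_
  obtain ⟨j, -, hj⟩ :=
    Finset.univ.exists_ne_zero_of_sum_pow_ne_zero (v · k) (by omega) (hdiag k).ne'
  exact ⟨j, hj⟩

theorem stmt6 (m n p q : ℕ) (hm : Even m) (hm2 : 2 ≤ m) (hn : 2 ≤ n)
    (u : Fin p → Fin n → ℝ) (v : Fin q → Fin n → ℝ)
    (hu : Submodule.span ℝ (Set.range u) = ⊤)
    (hdiag : ∀ k : Fin n, 0 < ∑ j, v j k ^ m) :
    Submodule.span ℝ (Set.range fun ij : Fin p × Fin q => u ij.1 * v ij.2) = ⊤ :=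
  stmt6_general m n p q hm2 u v hu hdiag
end

section
/- Let the order-4 dimension-2 symmetric tensor A be defined so that its quartic form is A x^4 = (x_1 + x_2)^4 + (x_1 + 1000 x_2)^4 − 0.0001 (x_1 + 0.0001 x_2)^4. Then A x^4 > 0 for all nonzero x ∈ R², i.e., A is positive definite. -/
/-! Writing `u = x₀ + x₁` and `v = x₀ + 1000 x₁`, the perturbing form is
`x₀ + 10⁻⁴ x₁ = α u + β v` with `|α|, |β| ≤ 1000/999`. Convexity of `t ↦ t⁴` gives
`(α u + β v)⁴ ≤ 8 (α⁴ u⁴ + β⁴ v⁴)`, which the weight `10⁻⁴` cannot make exceed `u⁴ + v⁴`. -/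

theorem add_pow_four_le (p q : ℝ) : (p + q) ^ 4 ≤ 8 * (p ^ 4 + q ^ 4) := by
  -- `8 (p⁴ + q⁴) - (p + q)⁴ = (p - q)² (7p² + 10pq + 7q²)`
  nlinarith [mul_nonneg (sq_nonneg (p - q)) (add_nonneg (sq_nonneg (p + q)) (sq_nonneg (p - q))),
    mul_nonneg (sq_nonneg (p - q)) (sq_nonneg (p + q))]

theorem pow_four_add_pow_four_sub_pos {u v c α β : ℝ} (huv : u ≠ 0 ∨ v ≠ 0) (hc : 0 ≤ c)
    (hα : 8 * c * α ^ 4 < 1) (hβ : 8 * c * β ^ 4 < 1) :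
    0 < u ^ 4 + v ^ 4 - c * (α * u + β * v) ^ 4 := by
  have hconv : (α * u + β * v) ^ 4 ≤ 8 * (α ^ 4 * u ^ 4 + β ^ 4 * v ^ 4) := by
    simpa only [mul_pow] using add_pow_four_le (α * u) (β * v)
  have hweighted : 0 < (1 - 8 * c * α ^ 4) * u ^ 4 + (1 - 8 * c * β ^ 4) * v ^ 4 := by
    have hα' : 0 < 1 - 8 * c * α ^ 4 := sub_pos.2 hα
    have hβ' : 0 < 1 - 8 * c * β ^ 4 := sub_pos.2 hβ
    rcases huv with h | h
    · exact add_pos_of_pos_of_nonneg (mul_pos hα' (Even.pow_pos ⟨2, rfl⟩ h)) (by positivity)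
    · exact add_pos_of_nonneg_of_pos (by positivity) (mul_pos hβ' (Even.pow_pos ⟨2, rfl⟩ h))
  nlinarith [mul_le_mul_of_nonneg_left hconv hc]

theorem stmt13 (x : Fin 2 → ℝ) (hx : x ≠ 0) :
    0 < (x 0 + x 1) ^ 4 + (x 0 + 1000 * x 1) ^ 4
        - 0.0001 * (x 0 + 0.0001 * x 1) ^ 4 := by
  have huv : x 0 + x 1 ≠ 0 ∨ x 0 + 1000 * x 1 ≠ 0 := by
    by_contra! h
    refine hx (funext fun i => ?_)
    fin_cases i <;> simp <;> linarith [h.1, h.2]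
  have hlin : x 0 + 0.0001 * x 1
      = (1000 - 0.0001) / 999 * (x 0 + x 1) + (0.0001 - 1) / 999 * (x 0 + 1000 * x 1) := by
    ring
  rw [hlin]
  exact pow_four_add_pow_four_sub_pos huv (by norm_num) (by norm_num) (by norm_num)
end
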